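/- Under the partially linear models and A ⊥ U | X, for any measurable 3-vector function d of X, the moment condition E[d(X)·(A−π(X))·ψ(O;θ,h*)^T] = 0 holds at the true θ, where ψ is the estimating function of Lemma 2.1 and π(X)=E(A|X). -/

import Mathlib

/-!
Write `k = σ(X, U)`, `n' = σ(A, X, U)` and `n = σ(M, A, X, U)`. Conditional independence of `A`
and `U` given `X` yields `E[f(A) | X, U] = E[f(A) | X]`: for an event `u` of `U` one first checks
`E[1_u | X, A] = E[1_u | X]` on the π-system of intersections, and the pull-out property then
moves the conditioning from `1_u` onto `f(A)`. Each moment is evaluated by repeatedly replacing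
one factor by its conditional expectation given a σ-algebra for which the other factor is
measurable: `Y - θ₁M - θ₂A` becomes `g(X, U)` given `n`, `M - θ₃A` becomes `h(X, U)` given `n'`,
and `A - π(X)` has conditional mean zero given `k`. For `ψ₂` these steps leave
`E[(A - π)(θ₂A + g) | X, U] = θ₂ Var(A | X)`, a function of `X`, against `h - h*`, which has
conditional mean zero given `X`.
-/

open MeasureTheory ProbabilityTheory Filter

lemma Set.mul_indicator_one {Ω : Type*} (s : Set Ω) (φ : Ω → ℝ) :
    φ * s.indicator (fun _ => 1) = s.indicator φ := by
  ext x
  by_cases hx : x ∈ s <;> simp [hx]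

namespace MeasureTheory

variable {Ω : Type*} {m₁ m₂ mΩ : MeasurableSpace Ω} {μ : Measure Ω}

lemma isPiSystem_image2_inter_measurableSet :
    IsPiSystem (Set.image2 (· ∩ ·) {t | MeasurableSet[m₁] t} {u | MeasurableSet[m₂] u}) := by
  rintro _ ⟨t₁, ht₁, u₁, hu₁, rfl⟩ _ ⟨t₂, ht₂, u₂, hu₂, rfl⟩ -
  exact ⟨t₁ ∩ t₂, ht₁.inter ht₂, u₁ ∩ u₂, hu₁.inter hu₂, Set.inter_inter_inter_comm _ _ _ _⟩

lemma generateFrom_image2_inter_measurableSet :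
    MeasurableSpace.generateFrom
      (Set.image2 (· ∩ ·) {t | MeasurableSet[m₁] t} {u | MeasurableSet[m₂] u}) = m₁ ⊔ m₂ := by
  refine le_antisymm (MeasurableSpace.generateFrom_le ?_) (sup_le ?_ ?_)
  · rintro _ ⟨t, ht, u, hu, rfl⟩
    exact (le_sup_left (b := m₂) t ht).inter (le_sup_right (a := m₁) u hu)
  · exact fun t ht => MeasurableSpace.measurableSet_generateFrom
      ⟨t, ht, Set.univ, .univ, Set.inter_univ t⟩
  · exact fun u hu => MeasurableSpace.measurableSet_generateFrom
      ⟨Set.univ, .univ, u, hu, Set.univ_inter u⟩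

theorem ae_eq_condExp_sup_of_forall_setIntegral_inter_eq [IsFiniteMeasure μ]
    (h₁ : m₁ ≤ mΩ) (h₂ : m₂ ≤ mΩ) {f g : Ω → ℝ} (hf : Integrable f μ)
    (hg : StronglyMeasurable[m₁ ⊔ m₂] g) (hgi : Integrable g μ)
    (h : ∀ t u, MeasurableSet[m₁] t → MeasurableSet[m₂] u →
      ∫ x in t ∩ u, g x ∂μ = ∫ x in t ∩ u, f x ∂μ) :
    g =ᵐ[μ] μ[f | m₁ ⊔ m₂] := by
  have h₁₂ : m₁ ⊔ m₂ ≤ mΩ := sup_le h₁ h₂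
  suffices key : ∀ s, MeasurableSet[m₁ ⊔ m₂] s → ∫ x in s, g x ∂μ = ∫ x in s, f x ∂μ from
    ae_eq_condExp_of_forall_setIntegral_eq h₁₂ hf (fun s _ _ => hgi.integrableOn)
      (fun s hs _ => key s hs) hg.aestronglyMeasurable
  intro s hs
  induction s, hs using MeasurableSpace.induction_on_inter
      generateFrom_image2_inter_measurableSet.symm isPiSystem_image2_inter_measurableSet with
  | empty => simp
  | basic s hs =>
    obtain ⟨t, ht, u, hu, rfl⟩ := hs
    exact h t u ht hu
  | compl s hs ih =>
    have hs' := h₁₂ s hs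
    have huniv := h Set.univ Set.univ .univ .univ
    rw [Set.inter_univ, setIntegral_univ, setIntegral_univ] at huniv
    rw [← integral_add_compl hs' hgi, ← integral_add_compl hs' hf] at huniv
    linarith
  | iUnion s hdisj hs ih =>
    rw [integral_iUnion (fun i => h₁₂ _ (hs i)) hdisj hgi.integrableOn,
      integral_iUnion (fun i => h₁₂ _ (hs i)) hdisj hf.integrableOn]
    exact tsum_congr ih

section PullOut

variable {n : MeasurableSpace Ω} {F G G' : Ω → ℝ}

lemma condExp_mul_ae_eq_of_condExp_ae_eq (hF : AEStronglyMeasurable[n] F μ)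
    (hFG : Integrable (F * G) μ) (hG : Integrable G μ) (hG' : μ[G | n] =ᵐ[μ] G') :
    μ[F * G | n] =ᵐ[μ] F * G' :=
  (condExp_mul_of_aestronglyMeasurable_left hF hFG hG).trans (EventuallyEq.rfl.mul hG')

lemma integral_mul_eq_of_condExp_ae_eq [IsFiniteMeasure μ] (hn : n ≤ mΩ)
    (hF : AEStronglyMeasurable[n] F μ) (hFG : Integrable (F * G) μ) (hG : Integrable G μ)
    (hG' : μ[G | n] =ᵐ[μ] G') :
    ∫ ω, F ω * G ω ∂μ = ∫ ω, F ω * G' ω ∂μ :=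
  (integral_condExp hn).symm.trans
    (integral_congr_ae (condExp_mul_ae_eq_of_condExp_ae_eq hF hFG hG hG'))

lemma integrable_mul_of_condExp_ae_eq (hF : AEStronglyMeasurable[n] F μ)
    (hFG : Integrable (F * G) μ) (hG : Integrable G μ) (hG' : μ[G | n] =ᵐ[μ] G') :
    Integrable (F * G') μ :=
  integrable_condExp.congr (condExp_mul_ae_eq_of_condExp_ae_eq hF hFG hG hG')

end PullOut

section CondIndep

variable [StandardBorelSpace Ω] [IsFiniteMeasure μ] {m' : MeasurableSpace Ω}

theorem condExp_indicator_sup_ae_eq_of_condIndep (hm' : m' ≤ mΩ) (h₁ : m₁ ≤ mΩ) (h₂ : m₂ ≤ mΩ)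
    (hind : CondIndep m' m₁ m₂ hm' μ) {u : Set Ω} (hu : MeasurableSet[m₂] u) :
    μ⟦u | m' ⊔ m₁⟧ =ᵐ[μ] μ⟦u | m'⟧ := by
  refine (ae_eq_condExp_sup_of_forall_setIntegral_inter_eq hm' h₁
    ((integrable_const 1).indicator (h₂ u hu)) (stronglyMeasurable_condExp.mono le_sup_left)
    integrable_condExp fun t w ht hw => ?_).symm
  have hw' := h₁ w hw
  have hint : Integrable (μ⟦u | m'⟧ * w.indicator fun _ => 1) μ := by
    rw [Set.mul_indicator_one]
    exact integrable_condExp.indicator hw'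
  have hprod : μ[μ⟦u | m'⟧ * w.indicator (fun _ => 1) | m'] =ᵐ[μ] μ⟦u ∩ w | m'⟧ :=
    (condExp_mul_of_stronglyMeasurable_left stronglyMeasurable_condExp hint
      ((integrable_const 1).indicator hw')).trans
      ((condIndep_iff m' m₂ m₁ hm' h₂ h₁ μ).mp hind.symm u w hu hw).symm
  calc ∫ x in t ∩ w, (μ⟦u | m'⟧) x ∂μ
      = ∫ x in t, w.indicator (μ⟦u | m'⟧) x ∂μ := (setIntegral_indicator hw').symm
    _ = ∫ x in t, (μ⟦u ∩ w | m'⟧) x ∂μ := by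
        rw [← Set.mul_indicator_one w, ← setIntegral_condExp hm' hint ht]
        exact setIntegral_congr_ae (hm' t ht) (hprod.mono fun x hx _ => hx)
    _ = ∫ x in t ∩ w, u.indicator 1 x ∂μ := by
        rw [setIntegral_condExp hm' ((integrable_const 1).indicator ((h₂ u hu).inter hw')) ht,
          ← setIntegral_indicator hw', Set.indicator_indicator, Set.inter_comm]
        rfl

theorem setIntegral_condExp_of_condIndep (hm' : m' ≤ mΩ) (h₁ : m₁ ≤ mΩ) (h₂ : m₂ ≤ mΩ)
    (hind : CondIndep m' m₁ m₂ hm' μ) {g : Ω → ℝ} (hg : StronglyMeasurable[m' ⊔ m₁] g)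
    (hgi : Integrable g μ) {u : Set Ω} (hu : MeasurableSet[m₂] u) :
    ∫ x in u, (μ[g | m']) x ∂μ = ∫ x in u, g x ∂μ := by
  have hu' := h₂ u hu
  have h1u : Integrable (u.indicator fun _ => (1 : ℝ)) μ := (integrable_const 1).indicator hu'
  have hint : ∀ φ : Ω → ℝ, Integrable φ μ → Integrable (φ * u.indicator fun _ => 1) μ :=
    fun φ hφ => by rw [Set.mul_indicator_one]; exact hφ.indicator hu'
  have hB := condExp_indicator_sup_ae_eq_of_condIndep hm' h₁ h₂ hind hu
  have hgU : Integrable (μ⟦u | m'⟧ * g) μ := by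
    rw [mul_comm]
    exact integrable_mul_of_condExp_ae_eq hg.aestronglyMeasurable (hint g hgi) h1u hB
  calc ∫ x in u, (μ[g | m']) x ∂μ
      = ∫ x, (μ[g | m']) x * (μ⟦u | m'⟧) x ∂μ := by
        rw [← integral_indicator hu', ← Set.mul_indicator_one u (μ[g | m'])]
        exact integral_mul_eq_of_condExp_ae_eq hm' stronglyMeasurable_condExp.aestronglyMeasurable
          (hint _ integrable_condExp) h1u EventuallyEq.rfl
    _ = ∫ x, (μ⟦u | m'⟧) x * (μ[g | m']) x ∂μ := by simp only [mul_comm]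
    _ = ∫ x, (μ⟦u | m'⟧) x * g x ∂μ :=
        (integral_mul_eq_of_condExp_ae_eq hm' stronglyMeasurable_condExp.aestronglyMeasurable
          hgU hgi EventuallyEq.rfl).symm
    _ = ∫ x, g x * (μ⟦u | m'⟧) x ∂μ := by simp only [mul_comm]
    _ = ∫ x in u, g x ∂μ := by
        rw [← integral_indicator hu', ← Set.mul_indicator_one u g]
        exact (integral_mul_eq_of_condExp_ae_eq (sup_le hm' h₁) hg.aestronglyMeasurable
          (hint g hgi) h1u hB).symm

theorem condExp_sup_ae_eq_of_condIndep (hm' : m' ≤ mΩ) (h₁ : m₁ ≤ mΩ) (h₂ : m₂ ≤ mΩ)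
    (hind : CondIndep m' m₁ m₂ hm' μ) {f : Ω → ℝ} (hf : StronglyMeasurable[m₁] f)
    (hfi : Integrable f μ) :
    μ[f | m' ⊔ m₂] =ᵐ[μ] μ[f | m'] := by
  refine (ae_eq_condExp_sup_of_forall_setIntegral_inter_eq hm' h₂ hfi
    (stronglyMeasurable_condExp.mono le_sup_left) integrable_condExp fun t u ht hu => ?_).symm
  have ht' := hm' t ht
  rw [Set.inter_comm, ← setIntegral_indicator ht', ← setIntegral_indicator ht',
    ← setIntegral_condExp_of_condIndep hm' h₁ h₂ hind
      ((hf.mono le_sup_right).indicator (le_sup_left (b := m₁) t ht)) (hfi.indicator ht') hu]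
  exact setIntegral_congr_ae (h₂ u hu) ((condExp_indicator hfi ht).mono fun x hx _ => hx.symm)

end CondIndep

theorem condExp_comap_prodMk_ae_eq_of_condIndepFun [StandardBorelSpace Ω] [IsFiniteMeasure μ]
    {β 𝓧 𝓤 : Type*} [MeasurableSpace β]
    {m𝓧 : MeasurableSpace 𝓧} {m𝓤 : MeasurableSpace 𝓤} {A : Ω → β} {X : Ω → 𝓧} {U : Ω → 𝓤}
    (hA : Measurable A) (hX : Measurable X) (hU : Measurable U)
    (hAU : CondIndepFun (MeasurableSpace.comap X m𝓧) hX.comap_le A U μ) {f : β → ℝ}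
    (hf : Measurable f) (hfi : Integrable (f ∘ A) μ) :
    μ[f ∘ A | MeasurableSpace.comap (fun ω => (X ω, U ω)) inferInstance]
      =ᵐ[μ] μ[f ∘ A | MeasurableSpace.comap X m𝓧] := by
  have hk : MeasurableSpace.comap (fun ω => (X ω, U ω)) inferInstance
      = MeasurableSpace.comap X m𝓧 ⊔ MeasurableSpace.comap U m𝓤 :=
    MeasurableSpace.comap_prodMk X U
  rw [hk]
  exact condExp_sup_ae_eq_of_condIndep hX.comap_le hA.comap_le hU.comap_le
    ((condIndepFun_iff_condIndep _ _ A U μ).mp hAU)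
    (hf.comp (comap_measurable A)).stronglyMeasurable hfi

section MomentCondition

variable [IsFiniteMeasure μ] {m k n : MeasurableSpace Ω}

lemma condExp_sub_ae_eq_of_condExp_ae_eq_add (hn : n ≤ mΩ) {Y L r : Ω → ℝ}
    (hY : Integrable Y μ) (hL : StronglyMeasurable[n] L) (hLi : Integrable L μ)
    (hYL : μ[Y | n] =ᵐ[μ] L + r) : μ[Y - L | n] =ᵐ[μ] r := by
  filter_upwards [condExp_sub hY hLi n, hYL] with ω h1 h2
  simp [h1, h2, condExp_of_stronglyMeasurable hn hL hLi]

lemma integral_mul_eq_zero_of_condExp_ae_eq_zero (hn : n ≤ mΩ) {F G : Ω → ℝ}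
    (hF : AEStronglyMeasurable[n] F μ) (hFG : Integrable (F * G) μ) (hG : Integrable G μ)
    (hG0 : μ[G | n] =ᵐ[μ] 0) : ∫ ω, F ω * G ω ∂μ = 0 := by
  simp [integral_mul_eq_of_condExp_ae_eq hn hF hFG hG hG0]

lemma condExp_sub_ae_eq_zero_of_condExp_ae_eq (hmk : m ≤ k) (hk : k ≤ mΩ) {A π : Ω → ℝ}
    (hA : Integrable A μ) (hAk : μ[A | k] =ᵐ[μ] μ[A | m]) (hπ : π =ᵐ[μ] μ[A | m]) :
    μ[A - π | k] =ᵐ[μ] 0 := by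
  have hπk : AEStronglyMeasurable[k] π μ :=
    (stronglyMeasurable_condExp.mono hmk).aestronglyMeasurable.congr hπ.symm
  filter_upwards [condExp_sub hA (integrable_condExp.congr hπ.symm) k, hAk, hπ,
    condExp_of_aestronglyMeasurable' hk hπk (integrable_condExp.congr hπ.symm)] with ω h1 h2 h3 h4
  simp [h1, h2, h3, h4]

theorem integral_mul_sub_condExp_mul_eq_zero (hmk : m ≤ k) (hkn : k ≤ n) (hn : n ≤ mΩ)
    {D A π ψ g : Ω → ℝ} (hD : StronglyMeasurable[m] D) (hA : StronglyMeasurable[n] A)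
    (hAi : Integrable A μ) (hAk : μ[A | k] =ᵐ[μ] μ[A | m]) (hπ : π =ᵐ[μ] μ[A | m])
    (hψ : Integrable ψ μ) (hg : StronglyMeasurable[k] g) (hψg : μ[ψ | n] =ᵐ[μ] g)
    (hint : Integrable (fun ω => D ω * (A ω - π ω) * ψ ω) μ) :
    ∫ ω, D ω * (A ω - π ω) * ψ ω ∂μ = 0 := by
  have hπm : AEStronglyMeasurable[m] π μ :=
    stronglyMeasurable_condExp.aestronglyMeasurable.congr hπ.symm
  have hF : AEStronglyMeasurable[n] (fun ω => D ω * (A ω - π ω)) μ :=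
    (hD.mono (hmk.trans hkn)).aestronglyMeasurable.mul
      (hA.aestronglyMeasurable.sub (hπm.mono (hmk.trans hkn)))
  have hFg : Integrable (fun ω => D ω * g ω * (A ω - π ω)) μ :=
    (integrable_mul_of_condExp_ae_eq hF hint hψ hψg).congr
      (.of_forall fun ω => by simp only [Pi.mul_apply]; ring)
  rw [integral_mul_eq_of_condExp_ae_eq hn hF hint hψ hψg]
  calc ∫ ω, D ω * (A ω - π ω) * g ω ∂μ = ∫ ω, D ω * g ω * (A ω - π ω) ∂μ := by
        simp only [mul_right_comm]
    _ = 0 := integral_mul_eq_zero_of_condExp_ae_eq_zero (hkn.trans hn)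
        ((hD.mono hmk).mul hg).aestronglyMeasurable hFg (hAi.sub (integrable_condExp.congr hπ.symm))
        (condExp_sub_ae_eq_zero_of_condExp_ae_eq hmk (hkn.trans hn) hAi hAk hπ)

theorem condExp_sub_mul_add_ae_eq_smul_condVar (hmk : m ≤ k) (hk : k ≤ mΩ) {A π g : Ω → ℝ}
    (hA : MemLp A 2 μ) (hAk : μ[A | k] =ᵐ[μ] μ[A | m]) (hA2k : μ[A ^ 2 | k] =ᵐ[μ] μ[A ^ 2 | m])
    (hπ : π =ᵐ[μ] μ[A | m]) (hg : StronglyMeasurable[k] g) (hg2 : MemLp g 2 μ) (c : ℝ) :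
    μ[fun ω => (A ω - π ω) * (c * A ω + g ω) | k] =ᵐ[μ] c • Var[A; μ | m] := by
  have hπ2 : MemLp π 2 μ := (hA.condExp one_le_two).ae_eq hπ.symm
  have hπk : AEStronglyMeasurable[k] π μ :=
    (stronglyMeasurable_condExp.mono hmk).aestronglyMeasurable.congr hπ.symm
  have hW : MemLp (g - c • π) 2 μ := hg2.sub (hπ2.const_smul c)
  have hA2 : Integrable (A ^ 2) μ := hA.integrable_sq
  have hsplit : (fun ω => (A ω - π ω) * (c * A ω + g ω))
      = (c • A ^ 2 + (g - c • π) * A) - π * g := by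
    ext ω
    simp only [Pi.sub_apply, Pi.add_apply, Pi.mul_apply, Pi.smul_apply, Pi.pow_apply, smul_eq_mul]
    ring
  rw [hsplit]
  filter_upwards [condExp_sub ((hA2.smul c).add (hW.integrable_mul hA))
      (hπ2.integrable_mul hg2) k,
    condExp_add (hA2.smul c) (hW.integrable_mul hA) k,
    condExp_smul c (A ^ 2) k,
    condExp_mul_of_aestronglyMeasurable_left (hg.aestronglyMeasurable.sub (hπk.const_smul c))
      (hW.integrable_mul hA) (hA.integrable one_le_two),
    condExp_of_aestronglyMeasurable' hk (hπk.mul hg.aestronglyMeasurable)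
      (hπ2.integrable_mul hg2),
    hAk, hA2k, hπ, condVar_ae_eq_condExp_sq_sub_sq_condExp (hmk.trans hk) hA]
    with ω h1 h2 h3 h4 h5 h6 h7 h8 h9
  simp only [Pi.sub_apply, Pi.add_apply, Pi.mul_apply, Pi.smul_apply, Pi.pow_apply,
    smul_eq_mul] at h1 h2 h3 h4 h5 h9 ⊢
  rw [h1, h2, h3, h4, h5, h6, h7, h9, h8]
  ring

theorem integral_mul_sub_mul_add_mul_sub_condExp_eq_zero (hmk : m ≤ k) (hk : k ≤ mΩ)
    {D A π g h hX : Ω → ℝ} (c : ℝ) (hD : StronglyMeasurable[m] D) (hA : MemLp A 2 μ)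
    (hAk : μ[A | k] =ᵐ[μ] μ[A | m]) (hA2k : μ[A ^ 2 | k] =ᵐ[μ] μ[A ^ 2 | m])
    (hπ : π =ᵐ[μ] μ[A | m]) (hg : StronglyMeasurable[k] g) (hg2 : MemLp g 2 μ)
    (hh : StronglyMeasurable[k] h) (hhi : Integrable h μ) (hhX : hX =ᵐ[μ] μ[h | m])
    (hint : Integrable (fun ω => D ω * (A ω - π ω) * (c * A ω + g ω) * (h ω - hX ω)) μ) :
    ∫ ω, D ω * (A ω - π ω) * (c * A ω + g ω) * (h ω - hX ω) ∂μ = 0 := by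
  have hXm : AEStronglyMeasurable[m] hX μ :=
    stronglyMeasurable_condExp.aestronglyMeasurable.congr hhX.symm
  have hF : AEStronglyMeasurable[k] (fun ω => D ω * (h ω - hX ω)) μ :=
    (hD.mono hmk).aestronglyMeasurable.mul (hh.aestronglyMeasurable.sub (hXm.mono hmk))
  have hG : Integrable (fun ω => (A ω - π ω) * (c * A ω + g ω)) μ :=
    (hA.sub ((hA.condExp one_le_two).ae_eq hπ.symm)).integrable_mul ((hA.const_mul c).add hg2)
  have hV := condExp_sub_mul_add_ae_eq_smul_condVar hmk hk hA hAk hA2k hπ hg hg2 c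
  have hFG : Integrable (fun ω => D ω * (h ω - hX ω) * ((A ω - π ω) * (c * A ω + g ω))) μ :=
    hint.congr (.of_forall fun ω => by ring)
  calc ∫ ω, D ω * (A ω - π ω) * (c * A ω + g ω) * (h ω - hX ω) ∂μ
      = ∫ ω, D ω * (h ω - hX ω) * ((A ω - π ω) * (c * A ω + g ω)) ∂μ := by
        congr 1 with ω
        ring
    _ = ∫ ω, D ω * (h ω - hX ω) * (c • Var[A; μ | m]) ω ∂μ :=
        integral_mul_eq_of_condExp_ae_eq hk hF hFG hG hV
    _ = ∫ ω, D ω * (c • Var[A; μ | m]) ω * (h ω - hX ω) ∂μ := by simp only [mul_right_comm]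
    _ = 0 := integral_mul_eq_zero_of_condExp_ae_eq_zero (hmk.trans hk)
        (hD.mul (stronglyMeasurable_condVar.const_smul c)).aestronglyMeasurable
        ((integrable_mul_of_condExp_ae_eq hF hFG hG hV).congr
          (.of_forall fun ω => by simp only [Pi.mul_apply]; ring))
        (hhi.sub (integrable_condExp.congr hhX.symm))
        (condExp_sub_ae_eq_zero_of_condExp_ae_eq le_rfl (hmk.trans hk) hhi EventuallyEq.rfl hhX)

theorem integral_mul_sub_mul_sub_condExp_mul_eq_zero {n' : MeasurableSpace Ω} (hmk : m ≤ k)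
    (hkn' : k ≤ n') (hn'n : n' ≤ n) (hn : n ≤ mΩ) {D A π φ ψ g h hX : Ω → ℝ} (c : ℝ)
    (hD : StronglyMeasurable[m] D) (hA : StronglyMeasurable[n'] A) (hA2 : MemLp A 2 μ)
    (hAk : μ[A | k] =ᵐ[μ] μ[A | m]) (hA2k : μ[A ^ 2 | k] =ᵐ[μ] μ[A ^ 2 | m])
    (hπ : π =ᵐ[μ] μ[A | m]) (hφ : StronglyMeasurable[n] φ) (hφi : Integrable φ μ)
    (hh : StronglyMeasurable[k] h) (hhi : Integrable h μ) (hφh : μ[φ | n'] =ᵐ[μ] h)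
    (hhX : hX =ᵐ[μ] μ[h | m]) (hψ : Integrable ψ μ) (hg : StronglyMeasurable[k] g)
    (hg2 : MemLp g 2 μ) (hψg : μ[ψ | n] =ᵐ[μ] fun ω => c * A ω + g ω)
    (hint : Integrable (fun ω => D ω * (A ω - π ω) * ((φ ω - hX ω) * ψ ω)) μ) :
    ∫ ω, D ω * (A ω - π ω) * ((φ ω - hX ω) * ψ ω) ∂μ = 0 := by
  have hmn' : m ≤ n' := hmk.trans hkn'
  have hπm : AEStronglyMeasurable[m] π μ :=
    stronglyMeasurable_condExp.aestronglyMeasurable.congr hπ.symm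
  have hXm : AEStronglyMeasurable[m] hX μ :=
    stronglyMeasurable_condExp.aestronglyMeasurable.congr hhX.symm
  have hXi : Integrable hX μ := integrable_condExp.congr hhX.symm
  have hF₁ : AEStronglyMeasurable[n] (fun ω => D ω * (A ω - π ω) * (φ ω - hX ω)) μ :=
    ((hD.mono (hmn'.trans hn'n)).aestronglyMeasurable.mul
      ((hA.mono hn'n).aestronglyMeasurable.sub (hπm.mono (hmn'.trans hn'n)))).mul
      (hφ.aestronglyMeasurable.sub (hXm.mono (hmn'.trans hn'n)))
  have hF₂ : AEStronglyMeasurable[n'] (fun ω => D ω * (A ω - π ω) * (c * A ω + g ω)) μ :=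
    ((hD.mono hmn').aestronglyMeasurable.mul (hA.aestronglyMeasurable.sub (hπm.mono hmn'))).mul
      ((hA.const_mul c).add (hg.mono hkn')).aestronglyMeasurable
  have hφX : μ[fun ω => φ ω - hX ω | n'] =ᵐ[μ] fun ω => h ω - hX ω := by
    filter_upwards [condExp_sub hφi hXi n', hφh,
      condExp_of_aestronglyMeasurable' (hn'n.trans hn) (hXm.mono hmn') hXi] with ω h1 h2 h3
    rw [Pi.sub_apply, h2, h3] at h1
    exact h1
  have I₁ : Integrable (fun ω => D ω * (A ω - π ω) * (φ ω - hX ω) * ψ ω) μ :=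
    hint.congr (.of_forall fun ω => by ring)
  have I₂ : Integrable (fun ω => D ω * (A ω - π ω) * (c * A ω + g ω) * (φ ω - hX ω)) μ :=
    (integrable_mul_of_condExp_ae_eq hF₁ I₁ hψ hψg).congr
      (.of_forall fun ω => by simp only [Pi.mul_apply]; ring)
  calc ∫ ω, D ω * (A ω - π ω) * ((φ ω - hX ω) * ψ ω) ∂μ
      = ∫ ω, D ω * (A ω - π ω) * (φ ω - hX ω) * ψ ω ∂μ := by simp only [mul_assoc]
    _ = ∫ ω, D ω * (A ω - π ω) * (φ ω - hX ω) * (c * A ω + g ω) ∂μ :=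
        integral_mul_eq_of_condExp_ae_eq hn hF₁ I₁ hψ hψg
    _ = ∫ ω, D ω * (A ω - π ω) * (c * A ω + g ω) * (φ ω - hX ω) ∂μ := by
        simp only [mul_right_comm]
    _ = ∫ ω, D ω * (A ω - π ω) * (c * A ω + g ω) * (h ω - hX ω) ∂μ :=
        integral_mul_eq_of_condExp_ae_eq (hn'n.trans hn) hF₂ I₂ (hφi.sub hXi) hφX
    _ = 0 := integral_mul_sub_mul_add_mul_sub_condExp_eq_zero hmk (hkn'.trans (hn'n.trans hn)) c
        hD hA2 hAk hA2k hπ hg hg2 hh hhi hhX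
        (integrable_mul_of_condExp_ae_eq hF₂ I₂ (hφi.sub hXi) hφX)

end MomentCondition

end MeasureTheory

theorem stmt18_general {Ω 𝓧 𝓤 : Type*} {mΩ : MeasurableSpace Ω} [StandardBorelSpace Ω]
    {m𝓧 : MeasurableSpace 𝓧} {m𝓤 : MeasurableSpace 𝓤}
    (μ : Measure Ω) [IsProbabilityMeasure μ]
    (Y A M : Ω → ℝ) (X : Ω → 𝓧) (U : Ω → 𝓤)
    (hAm : Measurable A) (hMm : Measurable M)
    (hXm : Measurable X) (hUm : Measurable U)
    (hY : MemLp Y 2 μ) (hA : MemLp A 2 μ) (hM : MemLp M 2 μ)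
    (θ1 θ2 θ3 : ℝ) (g h : 𝓧 × 𝓤 → ℝ) (hg : Measurable g) (hh : Measurable h)
    (hgi : MemLp (fun ω => g (X ω, U ω)) 2 μ)
    (hhi : MemLp (fun ω => h (X ω, U ω)) 2 μ)
    (hout : μ[Y | MeasurableSpace.comap (fun ω => (M ω, A ω, X ω, U ω)) inferInstance]
        =ᵐ[μ] fun ω => θ1 * M ω + θ2 * A ω + g (X ω, U ω))
    (hmed : μ[M | MeasurableSpace.comap (fun ω => (A ω, X ω, U ω)) inferInstance]
        =ᵐ[μ] fun ω => θ3 * A ω + h (X ω, U ω))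
    (hAU : CondIndepFun (MeasurableSpace.comap X m𝓧) hXm.comap_le A U μ)
    (piX hstar : Ω → ℝ)
    (hpiX : piX =ᵐ[μ] μ[A | MeasurableSpace.comap X m𝓧])
    (hhstar : hstar =ᵐ[μ] μ[fun ω => h (X ω, U ω) | MeasurableSpace.comap X m𝓧])
    (d : 𝓧 → Fin 3 → ℝ) (hd : ∀ i, Measurable (fun x => d x i))
    (hint1 : ∀ i : Fin 3, Integrable
      (fun ω => d (X ω) i * (A ω - piX ω) * (Y ω - θ1 * M ω - θ2 * A ω)) μ)
    (hint2 : ∀ i : Fin 3, Integrable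
      (fun ω => d (X ω) i * (A ω - piX ω)
        * ((M ω - θ3 * A ω - hstar ω) * (Y ω - θ1 * M ω))) μ)
    (hint3 : ∀ i : Fin 3, Integrable
      (fun ω => d (X ω) i * (A ω - piX ω) * (M ω - θ3 * A ω)) μ) :
    ∀ i : Fin 3,
      (∫ ω, d (X ω) i * (A ω - piX ω) * (Y ω - θ1 * M ω - θ2 * A ω) ∂μ = 0)
      ∧ (∫ ω, d (X ω) i * (A ω - piX ω)
          * ((M ω - θ3 * A ω - hstar ω) * (Y ω - θ1 * M ω)) ∂μ = 0)
      ∧ (∫ ω, d (X ω) i * (A ω - piX ω) * (M ω - θ3 * A ω) ∂μ = 0) := by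
  intro i
  set mX := MeasurableSpace.comap X m𝓧
  set k := MeasurableSpace.comap (fun ω => (X ω, U ω)) inferInstance
  set n' := MeasurableSpace.comap (fun ω => (A ω, X ω, U ω)) inferInstance
  set n := MeasurableSpace.comap (fun ω => (M ω, A ω, X ω, U ω)) inferInstance
  have hmk : mX ≤ k := le_sup_left.trans (MeasurableSpace.comap_prodMk X U).ge
  have hkn' : k ≤ n' := le_sup_right.trans (MeasurableSpace.comap_prodMk A _).ge
  have hn'n : n' ≤ n := le_sup_right.trans (MeasurableSpace.comap_prodMk M _).ge
  have hn : n ≤ mΩ := (hMm.prodMk (hAm.prodMk (hXm.prodMk hUm))).comap_le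
  have hA' : StronglyMeasurable[n'] A :=
    (measurable_fst.comp (comap_measurable _)).stronglyMeasurable
  have hM' : StronglyMeasurable[n] M :=
    (measurable_fst.comp (comap_measurable _)).stronglyMeasurable
  have hD : StronglyMeasurable[mX] fun ω => d (X ω) i :=
    ((hd i).comp (comap_measurable X)).stronglyMeasurable
  have hgk : StronglyMeasurable[k] fun ω => g (X ω, U ω) :=
    (hg.comp (comap_measurable _)).stronglyMeasurable
  have hhk : StronglyMeasurable[k] fun ω => h (X ω, U ω) :=
    (hh.comp (comap_measurable _)).stronglyMeasurable
  have iY := hY.integrable one_le_two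
  have iA := hA.integrable one_le_two
  have iM := hM.integrable one_le_two
  have hAk : μ[A | k] =ᵐ[μ] μ[A | mX] :=
    condExp_comap_prodMk_ae_eq_of_condIndepFun hAm hXm hUm hAU measurable_id iA
  have hA2k : μ[A ^ 2 | k] =ᵐ[μ] μ[A ^ 2 | mX] :=
    condExp_comap_prodMk_ae_eq_of_condIndepFun hAm hXm hUm hAU (measurable_id.pow_const 2)
      hA.integrable_sq
  have hψ₁ : μ[fun ω => Y ω - θ1 * M ω - θ2 * A ω | n] =ᵐ[μ] fun ω => g (X ω, U ω) := by
    rw [show (fun ω => Y ω - θ1 * M ω - θ2 * A ω) = Y - fun ω => θ1 * M ω + θ2 * A ω by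
      ext ω; simp only [Pi.sub_apply]; ring]
    exact condExp_sub_ae_eq_of_condExp_ae_eq_add hn iY
      ((hM'.const_mul θ1).add ((hA'.mono hn'n).const_mul θ2))
      ((iM.const_mul θ1).add (iA.const_mul θ2)) hout
  have hψ₂ : μ[fun ω => Y ω - θ1 * M ω | n] =ᵐ[μ] fun ω => θ2 * A ω + g (X ω, U ω) :=
    condExp_sub_ae_eq_of_condExp_ae_eq_add hn iY (hM'.const_mul θ1) (iM.const_mul θ1)
      (hout.trans (.of_forall fun ω => add_assoc _ _ _))
  have hφ : μ[fun ω => M ω - θ3 * A ω | n'] =ᵐ[μ] fun ω => h (X ω, U ω) :=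
    condExp_sub_ae_eq_of_condExp_ae_eq_add (hn'n.trans hn) iM (hA'.const_mul θ3)
      (iA.const_mul θ3) hmed
  refine ⟨?_, ?_, ?_⟩
  · exact integral_mul_sub_condExp_mul_eq_zero hmk (hkn'.trans hn'n) hn hD (hA'.mono hn'n) iA
      hAk hpiX ((iY.sub (iM.const_mul θ1)).sub (iA.const_mul θ2)) hgk hψ₁ (hint1 i)
  · exact integral_mul_sub_mul_sub_condExp_mul_eq_zero hmk hkn' hn'n hn θ2 hD hA' hA hAk hA2k
      hpiX (hM'.sub ((hA'.mono hn'n).const_mul θ3)) (iM.sub (iA.const_mul θ3)) hhk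
      (hhi.integrable one_le_two) hφ hhstar (iY.sub (iM.const_mul θ1)) hgk hgi hψ₂ (hint2 i)
  · exact integral_mul_sub_condExp_mul_eq_zero hmk hkn' (hn'n.trans hn) hD hA' iA hAk hpiX
      (iM.sub (iA.const_mul θ3)) hhk hφ (hint3 i)

/-- under the partially linear models and `A ⊥ U | X`, for any measurable
3-vector function `d` of `X`, the moment condition
`E[d(X)·(A − π(X))·ψ(O;θ,h*)ᵀ] = 0` holds at the true `θ`, where `ψ` is the estimating
function of Lemma 2.1 and `π(X) = E(A|X)`. -/
theorem stmt18 {Ω 𝓧 𝓤 : Type*} {mΩ : MeasurableSpace Ω} [StandardBorelSpace Ω] [Nonempty Ω]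
    {m𝓧 : MeasurableSpace 𝓧} {m𝓤 : MeasurableSpace 𝓤}
    (μ : Measure Ω) [IsProbabilityMeasure μ]
    (Y A M : Ω → ℝ) (X : Ω → 𝓧) (U : Ω → 𝓤)
    (hYm : Measurable Y) (hAm : Measurable A) (hMm : Measurable M)
    (hXm : Measurable X) (hUm : Measurable U)
    (hY : MemLp Y 2 μ) (hA : MemLp A 2 μ) (hM : MemLp M 2 μ)
    (θ1 θ2 θ3 : ℝ) (g h : 𝓧 × 𝓤 → ℝ) (hg : Measurable g) (hh : Measurable h)
    (hgi : MemLp (fun ω => g (X ω, U ω)) 2 μ)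
    (hhi : MemLp (fun ω => h (X ω, U ω)) 2 μ)
    (hout : μ[Y | MeasurableSpace.comap (fun ω => (M ω, A ω, X ω, U ω)) inferInstance]
        =ᵐ[μ] fun ω => θ1 * M ω + θ2 * A ω + g (X ω, U ω))
    (hmed : μ[M | MeasurableSpace.comap (fun ω => (A ω, X ω, U ω)) inferInstance]
        =ᵐ[μ] fun ω => θ3 * A ω + h (X ω, U ω))
    (hAU : CondIndepFun (MeasurableSpace.comap X m𝓧) hXm.comap_le A U μ)
    (piX hstar : Ω → ℝ)
    (hpiX : piX =ᵐ[μ] μ[A | MeasurableSpace.comap X m𝓧])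
    (hhstar : hstar =ᵐ[μ] μ[fun ω => h (X ω, U ω) | MeasurableSpace.comap X m𝓧])
    (d : 𝓧 → Fin 3 → ℝ) (hd : ∀ i, Measurable (fun x => d x i))
    (hint1 : ∀ i : Fin 3, Integrable
      (fun ω => d (X ω) i * (A ω - piX ω) * (Y ω - θ1 * M ω - θ2 * A ω)) μ)
    (hint2 : ∀ i : Fin 3, Integrable
      (fun ω => d (X ω) i * (A ω - piX ω)
        * ((M ω - θ3 * A ω - hstar ω) * (Y ω - θ1 * M ω))) μ)
    (hint3 : ∀ i : Fin 3, Integrable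
      (fun ω => d (X ω) i * (A ω - piX ω) * (M ω - θ3 * A ω)) μ) :
    ∀ i : Fin 3,
      (∫ ω, d (X ω) i * (A ω - piX ω) * (Y ω - θ1 * M ω - θ2 * A ω) ∂μ = 0)
      ∧ (∫ ω, d (X ω) i * (A ω - piX ω)
          * ((M ω - θ3 * A ω - hstar ω) * (Y ω - θ1 * M ω)) ∂μ = 0)
      ∧ (∫ ω, d (X ω) i * (A ω - piX ω) * (M ω - θ3 * A ω) ∂μ = 0) :=
  stmt18_general (mΩ := mΩ) (m𝓤 := m𝓤) μ Y A M X U hAm hMm hXm hUm hY hA hM θ1 θ2 θ3 g h hg hh hgi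
    hhi hout hmed hAU piX hstar hpiX hhstar d hd hint1 hint2 hint3
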